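/- arXiv:0904.3460 — 2 statements merged into one kernel-verified Lean document; each statement's English description precedes it below -/
import Mathlib

section
/- Let f : ℝ → ℝ be four times continuously differentiable on an open interval containing α with f(α) = 0 and f'(α) ≠ 0. Define y(x) = x - f(x)/f'(x) and the midpoint-Newton iterate M(x) = x - f(x)/f'((x + y(x))/2). Then there exist a neighborhood U of α and C > 0 such that for all x ∈ U where the iterate is defined, |M(x) - α| ≤ C·|x - α|³. -/
/-!
Expanding `f` to second order with third-order remainder about `c = (x + α) / 2`, the
quadratic terms at `x` and at `α` cancel, so `f x = f' c * (x - α) + O(|x - α|³)`: this is the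
midpoint rule for `∫ f'`. The point `m = (x + y) / 2` where the iteration evaluates `f'` differs
from `c` by `(y - α) / 2 = O(|x - α|²)` because the Newton step is quadratically convergent, so
`f' m = f' c + O(|x - α|²)`. Hence `M x - α = (f' m * (x - α) - f x) / f' m = O(|x - α|³)`, as
`f'` stays away from `0` near `α`.
-/

open Set Filter Topology

section Taylor

variable {E : Type*} [NormedAddCommGroup E] [NormedSpace ℝ E] {K : Set ℝ}
  {g g' g'' g''' : ℝ → E} {C : ℝ}

theorem Convex.norm_taylor_remainder_one_le (hK : Convex ℝ K)
    (hg : ∀ t ∈ K, HasDerivAt g (g' t) t) (hg' : ∀ t ∈ K, HasDerivAt g' (g'' t) t)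
    (hC : ∀ t ∈ K, ‖g'' t‖ ≤ C) {a b : ℝ} (ha : a ∈ K) (hb : b ∈ K) :
    ‖g b - g a - (b - a) • g' a‖ ≤ C * |b - a| ^ 2 := by
  have hC0 : 0 ≤ C := (norm_nonneg _).trans (hC a ha)
  have hab : segment ℝ a b ⊆ K := hK.segment_subset ha hb
  have hderiv : ∀ t ∈ segment ℝ a b,
      HasDerivWithinAt (fun t => g t - (t - a) • g' a) (g' t - g' a) (segment ℝ a b) t := by
    intro t ht
    exact ((hg t (hab ht)).sub (((hasDerivAt_id t).sub_const a).smul_const (g' a)))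
      |>.hasDerivWithinAt.congr_deriv (by simp)
  have hbound : ∀ t ∈ segment ℝ a b, ‖g' t - g' a‖ ≤ C * |b - a| := fun t ht =>
    calc ‖g' t - g' a‖ ≤ C * ‖t - a‖ :=
          hK.norm_image_sub_le_of_norm_hasDerivWithin_le
            (fun u hu => (hg' u hu).hasDerivWithinAt) hC ha (hab ht)
      _ ≤ C * |b - a| := by
          rw [segment_eq_uIcc] at ht
          rw [Real.norm_eq_abs]
          exact mul_le_mul_of_nonneg_left (abs_sub_left_of_mem_uIcc ht) hC0
  calc ‖g b - g a - (b - a) • g' a‖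
      = ‖(g b - (b - a) • g' a) - (g a - (a - a) • g' a)‖ := by
        congr 1; module
    _ ≤ C * |b - a| * ‖b - a‖ :=
        (convex_segment a b).norm_image_sub_le_of_norm_hasDerivWithin_le hderiv hbound
          (left_mem_segment ℝ a b) (right_mem_segment ℝ a b)
    _ = C * |b - a| ^ 2 := by rw [Real.norm_eq_abs]; ring

theorem Convex.norm_taylor_remainder_two_le (hK : Convex ℝ K)
    (hg : ∀ t ∈ K, HasDerivAt g (g' t) t) (hg' : ∀ t ∈ K, HasDerivAt g' (g'' t) t)
    (hg'' : ∀ t ∈ K, HasDerivAt g'' (g''' t) t) (hC : ∀ t ∈ K, ‖g''' t‖ ≤ C)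
    {a b : ℝ} (ha : a ∈ K) (hb : b ∈ K) :
    ‖g b - g a - (b - a) • g' a - ((b - a) ^ 2 / 2) • g'' a‖ ≤ C * |b - a| ^ 3 := by
  have hC0 : 0 ≤ C := (norm_nonneg _).trans (hC a ha)
  have hab : segment ℝ a b ⊆ K := hK.segment_subset ha hb
  have hderiv : ∀ t ∈ segment ℝ a b,
      HasDerivWithinAt (fun t => g t - (t - a) • g' a - ((t - a) ^ 2 / 2) • g'' a)
        (g' t - g' a - (t - a) • g'' a) (segment ℝ a b) t := by
    intro t ht
    have hsq : HasDerivAt (fun t : ℝ => (t - a) ^ 2 / 2) (t - a) t := by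
      simpa using (((hasDerivAt_id t).sub_const a).pow 2).div_const 2
    exact (((hg t (hab ht)).sub (((hasDerivAt_id t).sub_const a).smul_const (g' a))).sub
      (hsq.smul_const (g'' a))).hasDerivWithinAt.congr_deriv (by simp)
  have hbound : ∀ t ∈ segment ℝ a b,
      ‖g' t - g' a - (t - a) • g'' a‖ ≤ C * |b - a| ^ 2 := fun t ht =>
    calc ‖g' t - g' a - (t - a) • g'' a‖ ≤ C * |t - a| ^ 2 :=
          hK.norm_taylor_remainder_one_le hg' hg'' hC ha (hab ht)
      _ ≤ C * |b - a| ^ 2 := by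
          rw [segment_eq_uIcc] at ht
          have := abs_sub_left_of_mem_uIcc ht
          gcongr
  calc ‖g b - g a - (b - a) • g' a - ((b - a) ^ 2 / 2) • g'' a‖
      = ‖(g b - (b - a) • g' a - ((b - a) ^ 2 / 2) • g'' a) -
          (g a - (a - a) • g' a - ((a - a) ^ 2 / 2) • g'' a)‖ := by
        congr 1; module
    _ ≤ C * |b - a| ^ 2 * ‖b - a‖ :=
        (convex_segment a b).norm_image_sub_le_of_norm_hasDerivWithin_le hderiv hbound
          (left_mem_segment ℝ a b) (right_mem_segment ℝ a b)
    _ = C * |b - a| ^ 3 := by rw [Real.norm_eq_abs]; ring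

theorem Convex.norm_sub_sub_smul_deriv_midpoint_le (hK : Convex ℝ K)
    (hg : ∀ t ∈ K, HasDerivAt g (g' t) t) (hg' : ∀ t ∈ K, HasDerivAt g' (g'' t) t)
    (hg'' : ∀ t ∈ K, HasDerivAt g'' (g''' t) t) (hC : ∀ t ∈ K, ‖g''' t‖ ≤ C)
    {a b : ℝ} (ha : a ∈ K) (hb : b ∈ K) :
    ‖g b - g a - (b - a) • g' ((a + b) / 2)‖ ≤ C / 4 * |b - a| ^ 3 := by
  set m := (a + b) / 2
  have hm : m ∈ K := by
    simpa [m, midpoint_eq_smul_add, div_eq_inv_mul] using hK.midpoint_mem ha hb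
  -- the quadratic terms of the two Taylor expansions about the midpoint cancel
  have hsplit : g b - g a - (b - a) • g' m =
      (g b - g m - (b - m) • g' m - ((b - m) ^ 2 / 2) • g'' m) -
        (g a - g m - (a - m) • g' m - ((a - m) ^ 2 / 2) • g'' m) := by
    have : (b - m) ^ 2 = (a - m) ^ 2 := by ring
    rw [this]; module
  have hbm : |b - m| = |b - a| / 2 := by rw [show b - m = (b - a) / 2 by ring, abs_div, abs_two]
  have ham : |a - m| = |b - a| / 2 := by
    rw [show a - m = -((b - a) / 2) by ring, abs_neg, abs_div, abs_two]
  calc ‖g b - g a - (b - a) • g' m‖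
      ≤ C * |b - m| ^ 3 + C * |a - m| ^ 3 := by
        rw [hsplit]
        exact (norm_sub_le _ _).trans (add_le_add
          (hK.norm_taylor_remainder_two_le hg hg' hg'' hC hm hb)
          (hK.norm_taylor_remainder_two_le hg hg' hg'' hC hm ha))
    _ = C / 4 * |b - a| ^ 3 := by rw [hbm, ham]; ring

end Taylor

theorem abs_sub_div_sub_le_div {x α u v d B : ℝ} (hd : 0 < d) (hv : d ≤ |v|)
    (hB : |v * (x - α) - u| ≤ B) : |x - u / v - α| ≤ B / d := by
  have hv0 : v ≠ 0 := abs_pos.mp (hd.trans_le hv)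
  rw [show x - u / v - α = (v * (x - α) - u) / v by field_simp; ring, abs_div]
  exact div_le_div₀ ((abs_nonneg _).trans hB) hB hd hv

section NewtonMethods

variable {f f' f'' f''' : ℝ → ℝ} {K : Set ℝ} {d B₂ B₃ α x : ℝ}

theorem Convex.abs_newton_sub_root_le (hK : Convex ℝ K)
    (hf : ∀ t ∈ K, HasDerivAt f (f' t) t) (hf' : ∀ t ∈ K, HasDerivAt f' (f'' t) t)
    (hB₂ : ∀ t ∈ K, |f'' t| ≤ B₂) (hd : 0 < d) (hf'x : d ≤ |f' x|)
    (hα : α ∈ K) (hx : x ∈ K) (hroot : f α = 0) :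
    |x - f x / f' x - α| ≤ B₂ / d * |x - α| ^ 2 := by
  have htaylor := hK.norm_taylor_remainder_one_le hf hf' (by simpa using hB₂) hx hα
  rw [hroot, Real.norm_eq_abs, abs_sub_comm α x, smul_eq_mul] at htaylor
  rw [div_mul_eq_mul_div]
  refine abs_sub_div_sub_le_div hd hf'x ?_
  rwa [show f' x * (x - α) - f x = 0 - f x - (α - x) * f' x by ring]

theorem Convex.abs_midpointNewton_sub_root_le (hK : Convex ℝ K)
    (hf : ∀ t ∈ K, HasDerivAt f (f' t) t) (hf' : ∀ t ∈ K, HasDerivAt f' (f'' t) t)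
    (hf'' : ∀ t ∈ K, HasDerivAt f'' (f''' t) t) (hd : 0 < d) (hf'K : ∀ t ∈ K, d ≤ |f' t|)
    (hB₂ : ∀ t ∈ K, |f'' t| ≤ B₂) (hB₃ : ∀ t ∈ K, |f''' t| ≤ B₃)
    (hα : α ∈ K) (hx : x ∈ K) (hroot : f α = 0) (hm : (x + (x - f x / f' x)) / 2 ∈ K) :
    |x - f x / f' ((x + (x - f x / f' x)) / 2) - α| ≤
      (B₃ / 4 + B₂ ^ 2 / (2 * d)) / d * |x - α| ^ 3 := by
  set y := x - f x / f' x
  set m := (x + y) / 2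
  set c := (α + x) / 2
  have hB₂0 : 0 ≤ B₂ := (abs_nonneg _).trans (hB₂ α hα)
  have hc : c ∈ K := by
    simpa [c, midpoint_eq_smul_add, div_eq_inv_mul] using hK.midpoint_mem hα hx
  have hmidpoint : |f x - f' c * (x - α)| ≤ B₃ / 4 * |x - α| ^ 3 := by
    simpa [hroot, mul_comm] using
      hK.norm_sub_sub_smul_deriv_midpoint_le hf hf' hf'' (by simpa using hB₃) hα hx
  have hy : |y - α| ≤ B₂ / d * |x - α| ^ 2 :=
    hK.abs_newton_sub_root_le hf hf' hB₂ hd (hf'K x hx) hα hx hroot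
  have hslope : |f' m - f' c| ≤ B₂ ^ 2 / (2 * d) * |x - α| ^ 2 := by
    have hmc : |m - c| = |y - α| / 2 := by
      rw [show m - c = (y - α) / 2 by simp only [m, c]; ring, abs_div, abs_two]
    calc |f' m - f' c| ≤ B₂ * |m - c| := by
          simpa using hK.norm_image_sub_le_of_norm_hasDerivWithin_le
            (fun t ht => (hf' t ht).hasDerivWithinAt) (by simpa using hB₂) hc hm
      _ ≤ B₂ * (B₂ / d * |x - α| ^ 2 / 2) := by rw [hmc]; gcongr
      _ = B₂ ^ 2 / (2 * d) * |x - α| ^ 2 := by field_simp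
  rw [div_mul_eq_mul_div]
  refine abs_sub_div_sub_le_div hd (hf'K m hm) ?_
  calc |f' m * (x - α) - f x|
      = |(f' m - f' c) * (x - α) - (f x - f' c * (x - α))| := by ring_nf
    _ ≤ |f' m - f' c| * |x - α| + |f x - f' c * (x - α)| := by
        rw [← abs_mul]; exact abs_sub _ _
    _ ≤ B₂ ^ 2 / (2 * d) * |x - α| ^ 2 * |x - α| + B₃ / 4 * |x - α| ^ 3 := by gcongr
    _ = (B₃ / 4 + B₂ ^ 2 / (2 * d)) * |x - α| ^ 3 := by ring

end NewtonMethods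

theorem ContDiffOn.hasDerivAt_deriv {𝕜 F : Type*} [NontriviallyNormedField 𝕜]
    [NormedAddCommGroup F] [NormedSpace 𝕜 F] {f : 𝕜 → F} {s : Set 𝕜} {n : WithTop ℕ∞}
    (hf : ContDiffOn 𝕜 n f s) (hs : IsOpen s) (hn : n ≠ 0) {x : 𝕜} (hx : x ∈ s) :
    HasDerivAt f (deriv f x) x :=
  ((hf.contDiffAt (hs.mem_nhds hx)).differentiableAt hn).hasDerivAt

theorem midpoint_newton_cubic_convergence
    (f : ℝ → ℝ) (α : ℝ) (s : Set ℝ) (hs : IsOpen s) (hαs : α ∈ s)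
    (hf : ContDiffOn ℝ 4 f s) (hroot : f α = 0) (hder : deriv f α ≠ 0) :
    ∃ U ∈ nhds α, ∃ C > (0:ℝ), ∀ x ∈ U,
      deriv f x ≠ 0 →
      deriv f ((x + (x - f x / deriv f x)) / 2) ≠ 0 →
      |(x - f x / deriv f ((x + (x - f x / deriv f x)) / 2)) - α| ≤ C * |x - α| ^ 3 := by
  have hf₁ : ContDiffOn ℝ 3 (deriv f) s := hf.deriv_of_isOpen hs (by norm_num)
  have hf₂ : ContDiffOn ℝ 2 (deriv (deriv f)) s := hf₁.deriv_of_isOpen hs (by norm_num)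
  have hf₃ : ContDiffOn ℝ 1 (deriv (deriv (deriv f))) s :=
    hf₂.deriv_of_isOpen hs (by norm_num)
  have hcont {g : ℝ → ℝ} {n : WithTop ℕ∞} (hg : ContDiffOn ℝ n g s) :
      ContinuousAt g α :=
    hg.continuousOn.continuousAt (hs.mem_nhds hαs)
  set d := |deriv f α| / 2
  set B₂ := |deriv (deriv f) α| + 1
  set B₃ := |deriv (deriv (deriv f)) α| + 1
  have hd : 0 < d := by positivity
  have hbounds : ∀ᶠ t in 𝓝 α, t ∈ s ∧ d < |deriv f t| ∧ |deriv (deriv f) t| < B₂ ∧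
      |deriv (deriv (deriv f)) t| < B₃ :=
    Eventually.and (hs.mem_nhds hαs) <|
      (continuousAt_const.eventually_lt (hcont hf₁).abs (half_lt_self (abs_pos.2 hder))).and <|
      ((hcont hf₂).abs.eventually_lt continuousAt_const (lt_add_one _)).and <|
      (hcont hf₃).abs.eventually_lt continuousAt_const (lt_add_one _)
  obtain ⟨ε, hε, hball⟩ := Metric.mem_nhds_iff.1 hbounds
  have hmid : Tendsto (fun x => (x + (x - f x / deriv f x)) / 2) (𝓝 α) (𝓝 α) := by
    simpa [hroot] using (((continuousAt_id.add
      (continuousAt_id.sub ((hcont hf).div (hcont hf₁) hder))).div_const 2)).tendsto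
  refine ⟨_, inter_mem (Metric.ball_mem_nhds α hε) (hmid (Metric.ball_mem_nhds α hε)),
    (B₃ / 4 + B₂ ^ 2 / (2 * d)) / d, by positivity, fun x ⟨hx, hmx⟩ _ _ => ?_⟩
  exact (convex_ball α ε).abs_midpointNewton_sub_root_le
    (fun t ht => hf.hasDerivAt_deriv hs (by norm_num) (hball ht).1)
    (fun t ht => hf₁.hasDerivAt_deriv hs (by norm_num) (hball ht).1)
    (fun t ht => hf₂.hasDerivAt_deriv hs (by norm_num) (hball ht).1) hd
    (fun t ht => (hball ht).2.1.le) (fun t ht => (hball ht).2.2.1.le)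
    (fun t ht => (hball ht).2.2.2.le) (Metric.mem_ball_self hε) hx hroot hmx
end

section
/- Let f : ℝ → ℝ be four times continuously differentiable on an open interval containing α with f(α) = 0 and f'(α) ≠ 0. Define y(x) = x - f(x)/f'(x) and the trapezoidal-Newton iterate T(x) = x - 2 f(x)/(f'(x) + f'(y(x))). Then there exist a neighborhood U of α and C > 0 such that for all x ∈ U where the iterate is defined, |T(x) - α| ≤ C·|x - α|³. -/
/-!
Put `y x = x - f x / f' x` and `D x = f' x + f' (y x)`. Then
`(T x - α) * D x = [(f' x + f' α) (x - α) - 2 (f x - f α)] + (f' (y x) - f' α) (x - α)`.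
The bracket is the error of the trapezoidal rule for `∫_α^x f'`, which is `O((x - α)³)`, and
Newton's step is quadratically convergent, `y x - α = O((x - α)²)`, so the second term is
`O((x - α)³)` as well. Since `D x → 2 f' α ≠ 0`, dividing by `D x` gives the cubic bound.
Each `O`-bound comes from the previous one by the mean value theorem: a function vanishing at
`α` whose derivative is `O((x - α)ⁿ)` is itself `O((x - α)ⁿ⁺¹)`.
-/

open Asymptotics Filter Metric Topology

theorem isBigO_sub_pow_succ_of_hasDerivAt {E : Type*} [NormedAddCommGroup E] [NormedSpace ℝ E]
    {f f' : ℝ → E} {x₀ : ℝ} {n : ℕ}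
    (hff' : ∀ᶠ x in 𝓝 x₀, HasDerivAt f (f' x) x) (hf' : f' =O[𝓝 x₀] fun x ↦ (x - x₀) ^ n) :
    (fun x ↦ f x - f x₀) =O[𝓝 x₀] fun x ↦ (x - x₀) ^ (n + 1) := by
  obtain ⟨c, hc, hbound⟩ := hf'.exists_pos
  obtain ⟨r, hr, hball⟩ := eventually_nhds_iff_ball.mp (hff'.and hbound.bound)
  refine .of_bound c (eventually_nhds_iff_ball.mpr ⟨r, hr, fun x hx ↦ ?_⟩)
  have hseg : segment ℝ x₀ x ⊆ ball x₀ r := (convex_ball x₀ r).segment_subset (mem_ball_self hr) hx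
  have hmvt := (convex_segment x₀ x).norm_image_sub_le_of_norm_hasDerivWithin_le
    (C := c * ‖x - x₀‖ ^ n) (fun y hy ↦ (hball y (hseg hy)).1.hasDerivWithinAt) (fun y hy ↦ ?_)
    (left_mem_segment ℝ x₀ x) (right_mem_segment ℝ x₀ x)
  · rwa [norm_pow, pow_succ, ← mul_assoc]
  · calc ‖f' y‖ ≤ c * ‖(y - x₀) ^ n‖ := (hball y (hseg hy)).2
      _ ≤ c * ‖x - x₀‖ ^ n := by
        rw [norm_pow]; gcongr; exact norm_sub_le_of_mem_segment hy

theorem ContDiffOn.eventually_hasDerivAt_deriv {E : Type*} [NormedAddCommGroup E]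
    [NormedSpace ℝ E] {f : ℝ → E} {s : Set ℝ} {n : WithTop ℕ∞} (hf : ContDiffOn ℝ n f s)
    (hs : IsOpen s) (hn : n ≠ 0) {x : ℝ} (hx : x ∈ s) :
    ∀ᶠ y in 𝓝 x, HasDerivAt f (deriv f y) y :=
  eventually_of_mem (hs.mem_nhds hx) fun _ hy ↦
    ((hf.differentiableOn hn).differentiableAt (hs.mem_nhds hy)).hasDerivAt

noncomputable def newtonStep (f f' : ℝ → ℝ) (x : ℝ) : ℝ := x - f x / f' x

noncomputable def trapezoidalNewtonStep (f f' : ℝ → ℝ) (x : ℝ) : ℝ :=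
  x - 2 * f x / (f' x + f' (newtonStep f f' x))

section

variable {f f' f'' f''' : ℝ → ℝ} {α : ℝ}

theorem tangent_error_isBigO (hf : ∀ᶠ x in 𝓝 α, HasDerivAt f (f' x) x)
    (hf' : ∀ᶠ x in 𝓝 α, HasDerivAt f' (f'' x) x) (hf'' : f'' =O[𝓝 α] (1 : ℝ → ℝ)) :
    (fun x ↦ f' x * (x - α) - (f x - f α)) =O[𝓝 α] fun x ↦ (x - α) ^ 2 := by
  have hderiv : ∀ᶠ x in 𝓝 α,
      HasDerivAt (fun x ↦ f' x * (x - α) - f x) (f'' x * (x - α)) x := by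
    filter_upwards [hf, hf'] with x hfx hf'x
    exact ((hf'x.mul ((hasDerivAt_id' x).sub_const α)).sub hfx).congr_deriv (by ring)
  have hbound : (fun x ↦ f'' x * (x - α)) =O[𝓝 α] fun x ↦ (x - α) ^ 1 := by
    simpa using hf''.mul (isBigO_refl (fun x ↦ x - α) (𝓝 α))
  refine (isBigO_sub_pow_succ_of_hasDerivAt hderiv hbound).congr_left fun x ↦ ?_
  ring

theorem trapezoid_error_isBigO (hf : ∀ᶠ x in 𝓝 α, HasDerivAt f (f' x) x)
    (hf' : ∀ᶠ x in 𝓝 α, HasDerivAt f' (f'' x) x) (hf'' : ∀ᶠ x in 𝓝 α, HasDerivAt f'' (f''' x) x)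
    (hf''' : f''' =O[𝓝 α] (1 : ℝ → ℝ)) :
    (fun x ↦ (f' x + f' α) * (x - α) - 2 * (f x - f α)) =O[𝓝 α] fun x ↦ (x - α) ^ 3 := by
  have hderiv : ∀ᶠ x in 𝓝 α, HasDerivAt (fun x ↦ (f' x + f' α) * (x - α) - 2 * f x)
      (f'' x * (x - α) - (f' x - f' α)) x := by
    filter_upwards [hf, hf'] with x hfx hf'x
    exact (((hf'x.add_const (f' α)).mul ((hasDerivAt_id' x).sub_const α)).sub
      (hfx.const_mul 2)).congr_deriv (by ring)
  refine (isBigO_sub_pow_succ_of_hasDerivAt hderiv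
    (tangent_error_isBigO hf' hf'' hf''')).congr_left fun x ↦ ?_
  ring

theorem newtonStep_sub_isBigO (hfα : f α = 0) (hf'α : f' α ≠ 0)
    (hf : ∀ᶠ x in 𝓝 α, HasDerivAt f (f' x) x) (hf' : ∀ᶠ x in 𝓝 α, HasDerivAt f' (f'' x) x)
    (hf'' : f'' =O[𝓝 α] (1 : ℝ → ℝ)) :
    (fun x ↦ newtonStep f f' x - α) =O[𝓝 α] fun x ↦ (x - α) ^ 2 := by
  have hcont : ContinuousAt f' α := hf'.self_of_nhds.continuousAt
  have hinv : (fun x ↦ (f' x)⁻¹) =O[𝓝 α] (1 : ℝ → ℝ) :=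
    (hcont.inv₀ hf'α).tendsto.isBigO_one ℝ
  refine ((tangent_error_isBigO hf hf' hf'').mul hinv).congr' ?_ (by simp)
  filter_upwards [hcont.eventually_ne hf'α] with x hx
  simp only [newtonStep, hfα]
  field_simp
  ring

theorem trapezoidalNewtonStep_sub_isBigO (hfα : f α = 0) (hf'α : f' α ≠ 0)
    (hf : ∀ᶠ x in 𝓝 α, HasDerivAt f (f' x) x) (hf' : ∀ᶠ x in 𝓝 α, HasDerivAt f' (f'' x) x)
    (hf'' : ∀ᶠ x in 𝓝 α, HasDerivAt f'' (f''' x) x) (hf''' : f''' =O[𝓝 α] (1 : ℝ → ℝ)) :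
    (fun x ↦ trapezoidalNewtonStep f f' x - α) =O[𝓝 α] fun x ↦ (x - α) ^ 3 := by
  set y := newtonStep f f'
  have hf'cont : ContinuousAt f' α := hf'.self_of_nhds.continuousAt
  have hy : (fun x ↦ y x - α) =O[𝓝 α] fun x ↦ (x - α) ^ 2 :=
    newtonStep_sub_isBigO hfα hf'α hf hf' (hf''.self_of_nhds.continuousAt.tendsto.isBigO_one ℝ)
  have hy_tendsto : Tendsto y (𝓝 α) (𝓝 α) := by
    refine tendsto_sub_nhds_zero_iff.mp (hy.trans_tendsto ?_)
    exact ((continuous_sub_right α).pow 2).tendsto' α 0 (by simp)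
  have hf'y : (fun x ↦ f' (y x) - f' α) =O[𝓝 α] fun x ↦ (x - α) ^ 2 :=
    (hf'.self_of_nhds.isBigO_sub.comp_tendsto hy_tendsto).trans hy
  have hD : Tendsto (fun x ↦ f' x + f' (y x)) (𝓝 α) (𝓝 (f' α + f' α)) :=
    hf'cont.tendsto.add (hf'cont.tendsto.comp hy_tendsto)
  have hD0 : f' α + f' α ≠ 0 := by rwa [← two_mul, mul_ne_zero_iff_left two_ne_zero]
  have hnum : (fun x ↦ (f' x + f' α) * (x - α) - 2 * (f x - f α) + (f' (y x) - f' α) * (x - α))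
      =O[𝓝 α] fun x ↦ (x - α) ^ 3 := by
    refine (trapezoid_error_isBigO hf hf' hf'' hf''').add ?_
    simpa [← pow_succ] using hf'y.mul (isBigO_refl (fun x ↦ x - α) (𝓝 α))
  refine (hnum.mul ((hD.inv₀ hD0).isBigO_one ℝ)).congr' ?_ (by simp)
  filter_upwards [hD.eventually_ne hD0] with x hx
  change _ = x - 2 * f x / (f' x + f' (y x)) - α
  rw [hfα]
  field_simp
  ring

end

theorem trapezoidal_newton_cubic_convergence
    (f : ℝ → ℝ) (α : ℝ) (s : Set ℝ) (hs : IsOpen s) (hαs : α ∈ s)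
    (hf : ContDiffOn ℝ 4 f s) (hroot : f α = 0) (hder : deriv f α ≠ 0) :
    ∃ U ∈ nhds α, ∃ C > (0:ℝ), ∀ x ∈ U,
      deriv f x ≠ 0 →
      deriv f x + deriv f (x - f x / deriv f x) ≠ 0 →
      |(x - 2 * f x / (deriv f x + deriv f (x - f x / deriv f x))) - α| ≤ C * |x - α| ^ 3 := by
  have hf3 : ContDiffOn ℝ 3 f s := hf.of_le (by norm_num)
  have hf2 : ContDiffOn ℝ 2 (deriv f) s := hf3.deriv_of_isOpen hs (by norm_num)
  have hf1 : ContDiffOn ℝ 1 (deriv (deriv f)) s := hf2.deriv_of_isOpen hs (by norm_num)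
  have hf0 : ContinuousOn (deriv (deriv (deriv f))) s :=
    hf1.continuousOn_deriv_of_isOpen hs le_rfl
  obtain ⟨C, hC, hbound⟩ := (trapezoidalNewtonStep_sub_isBigO hroot hder
    (hf3.eventually_hasDerivAt_deriv hs (by norm_num) hαs)
    (hf2.eventually_hasDerivAt_deriv hs (by norm_num) hαs)
    (hf1.eventually_hasDerivAt_deriv hs (by norm_num) hαs)
    ((hf0.continuousAt (hs.mem_nhds hαs)).tendsto.isBigO_one ℝ)).exists_pos
  refine ⟨_, hbound.bound, C, hC, fun x hx _ _ ↦ ?_⟩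
  simpa only [Set.mem_ofPred_eq, norm_pow, Real.norm_eq_abs, trapezoidalNewtonStep, newtonStep]
    using hx
end
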